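/- The swap involution on ℚ⟨Y^bi⟩ satisfies, for all k₁, k₂ ≥ 1 and m₁, m₂ ≥ 0: swap(y_{k₁,m₁}) = (m₁!/(k₁−1)!) · y_{m₁+1,k₁−1}, and swap(y_{k₁,m₁}y_{k₂,m₂}) = Σ_{u=0}^{m₁} Σ_{v=0}^{k₂−1} ((−1)^v/(u! v!)) · (m₁!/(k₁−1)!) · ((m₂+u)!/(k₂−1−v)!) · y_{m₂+1+u, k₂−1−v} y_{m₁+1−u, k₁−1+v}. -/

import Mathlib

/-!
STATEMENT 19: the values of the swap involution on `ℚ⟨Y^bi⟩` in depths one and two.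

`ℚ⟨Y^bi⟩` is realized as `List (ℕ × ℕ) →₀ ℚ`, the letter `y_{k,m}` (`k ≥ 1`) being
encoded as `(k-1, m)`.

The `ℚ`-linear map `swap` is characterized by its defining generating-series
property: for every depth `d` and all exponents `(x, y)`,
`swap(y_{x₁+1,y₁}⋯y_{x_d+1,y_d}) = (∏ yᵢ!) ∑_{w'} coeff_{(x,y)}(ρsub(w')) · w'`,
where for a word `w'` with letters `(Aᵢ, Mᵢ)` (i.e. `y_{Aᵢ+1,Mᵢ}`),
`ρsub(w') = ∏_i (Y₁+⋯+Y_{d+1-i})^{Aᵢ}·(X_{d+1-i}-X_{d+2-i})^{Mᵢ}/Mᵢ!` (with the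
convention `X_{d+1} = 0`) is the image of `ρ(w')` under the swap substitution
`X_i ↦ Y₁+⋯+Y_{d+1-i}`, `Y_i ↦ X_{d+1-i}-X_{d+2-i}`; the sum over `w'` is cut off at
total degree `N = ∑(xᵢ+yᵢ)`, which captures all nonzero contributions since
`ρsub(w')` is homogeneous of degree `∑(Aᵢ+Mᵢ)`.
-/

open Finsupp

/-- `ℚ⟨Y^bi⟩`; a letter `(a, m)` stands for `y_{a+1,m}`. -/
abbrev QY : Type := List (ℕ × ℕ) →₀ ℚ

/-- The word `y_{k₁,m₁} ⋯ y_{k_d,m_d}` of `ℚ⟨Y^bi⟩`. -/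
noncomputable def wY (w : List (ℕ × ℕ)) : QY := Finsupp.single w 1

/-- The polynomial
`∏_i (Y₁+⋯+Y_{d+1-i})^{A i} · (X_{d+1-i} - X_{d+2-i})^{B i} / (B i)!` in the
variables `X_{j+1} = Sum.inl j`, `Y_{j+1} = Sum.inr j` (with `X_{d+1} = 0`). -/
noncomputable def swapSubPoly (d : ℕ) (A B : Fin d → ℕ) :
    MvPolynomial (Fin d ⊕ Fin d) ℚ :=
  ∏ i : Fin d,
    ((∑ j : Fin d, if (j : ℕ) + (i : ℕ) < d then MvPolynomial.X (Sum.inr j) else 0) ^ A i *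
      ((∑ j : Fin d, if (j : ℕ) + (i : ℕ) = d - 1 then MvPolynomial.X (Sum.inl j) else 0) -
        (∑ j : Fin d, if (j : ℕ) + (i : ℕ) = d then MvPolynomial.X (Sum.inl j) else 0)) ^ B i *
      MvPolynomial.C (((B i).factorial : ℚ)⁻¹))


section helpers

lemma sum_piFinset_one {M : Type*} [AddCommMonoid M] (s : Finset ℕ) (g : (Fin 1 → ℕ) → M) :
    ∑ A ∈ Fintype.piFinset (fun _ : Fin 1 => s), g A = ∑ a ∈ s, g (fun _ => a) := by
  refine Finset.sum_nbij' (fun A => A 0) (fun a => fun _ => a) ?_ ?_ ?_ ?_ ?_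
  · intro A hA; exact (Fintype.mem_piFinset.mp hA) 0
  · intro a ha; exact Fintype.mem_piFinset.mpr (fun _ => ha)
  · intro A hA; funext i; have : i = 0 := Subsingleton.elim _ _; rw [this]
  · intro a ha; rfl
  · intro A hA; congr 1; funext i; have : i = 0 := Subsingleton.elim _ _; rw [this]

lemma sum_piFinset_two {M : Type*} [AddCommMonoid M] (s : Finset ℕ) (g : (Fin 2 → ℕ) → M) :
    ∑ A ∈ Fintype.piFinset (fun _ : Fin 2 => s), g A = ∑ a ∈ s, ∑ b ∈ s, g ![a, b] := by
  rw [← Finset.sum_product']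
  refine Finset.sum_nbij' (fun A => (A 0, A 1)) (fun p => ![p.1, p.2]) ?_ ?_ ?_ ?_ ?_
  · intro A hA; exact Finset.mk_mem_product ((Fintype.mem_piFinset.mp hA) 0) ((Fintype.mem_piFinset.mp hA) 1)
  · intro p hp
    have := Finset.mem_product.mp hp
    refine Fintype.mem_piFinset.mpr (fun i => ?_)
    fin_cases i
    · exact this.1
    · exact this.2
  · intro A hA; funext i; fin_cases i <;> rfl
  · intro p hp; rfl
  · intro A hA; congr 1; funext i; fin_cases i <;> rfl

lemma finsupp_eq_one (x y : Fin 1 → ℕ) (a b : ℕ) :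
    ((Finsupp.single (Sum.inr 0) a + Finsupp.single (Sum.inl 0) b : (Fin 1 ⊕ Fin 1) →₀ ℕ)
      = Finsupp.equivFunOnFinite.symm (Sum.elim x y)) ↔ (a = y 0 ∧ b = x 0) := by
  rw [Finsupp.ext_iff]
  simp only [Sum.forall, Fin.forall_fin_one]
  simp [Finsupp.single_apply]
  tauto

open MvPolynomial in
lemma coeff_one (x y A B : Fin 1 → ℕ) :
    MvPolynomial.coeff (Finsupp.equivFunOnFinite.symm (Sum.elim x y)) (swapSubPoly 1 A B) =
      if A 0 = y 0 ∧ B 0 = x 0 then (((B 0).factorial : ℚ))⁻¹ else 0 := by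
  have h : swapSubPoly 1 A B =
      (MvPolynomial.X (Sum.inr 0) : MvPolynomial (Fin 1 ⊕ Fin 1) ℚ) ^ A 0 *
        (MvPolynomial.X (Sum.inl 0) - 0) ^ B 0 * MvPolynomial.C (((B 0).factorial : ℚ)⁻¹) := by
    simp [swapSubPoly, Fin.prod_univ_one, Fin.sum_univ_one]
  rw [h, sub_zero, X_pow_eq_monomial, X_pow_eq_monomial, monomial_mul, mul_comm _ (C _),
    C_mul_monomial, coeff_monomial]
  simp only [finsupp_eq_one, mul_one]

lemma finsupp_eq_two (x y : Fin 2 → ℕ) (e1 e2 f1 f2 : ℕ) :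
    ((Finsupp.single (Sum.inl 0) e1 + Finsupp.single (Sum.inl 1) e2 +
        Finsupp.single (Sum.inr 0) f1 + Finsupp.single (Sum.inr 1) f2 : (Fin 2 ⊕ Fin 2) →₀ ℕ)
      = Finsupp.equivFunOnFinite.symm (Sum.elim x y)) ↔
    (e1 = x 0 ∧ e2 = x 1 ∧ f1 = y 0 ∧ f2 = y 1) := by
  rw [Finsupp.ext_iff]
  simp only [Sum.forall, Fin.forall_fin_two]
  simp [Finsupp.single_apply, Fin.ext_iff]
  tauto

open MvPolynomial in
lemma coeff_canon (t : (Fin 2 ⊕ Fin 2) →₀ ℕ) (e1 e2 f1 f2 : ℕ) (c : ℚ) :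
    MvPolynomial.coeff t (MvPolynomial.C c * MvPolynomial.X (Sum.inl 0) ^ e1 *
      MvPolynomial.X (Sum.inl 1) ^ e2 * MvPolynomial.X (Sum.inr 0) ^ f1 *
      MvPolynomial.X (Sum.inr 1) ^ f2) =
    if (Finsupp.single (Sum.inl 0) e1 + Finsupp.single (Sum.inl 1) e2 +
        Finsupp.single (Sum.inr 0) f1 + Finsupp.single (Sum.inr 1) f2 : (Fin 2 ⊕ Fin 2) →₀ ℕ) = t
      then c else 0 := by
  rw [X_pow_eq_monomial, X_pow_eq_monomial, X_pow_eq_monomial, X_pow_eq_monomial,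
    C_mul_monomial, monomial_mul, monomial_mul, monomial_mul, coeff_monomial]
  simp [mul_one]

open MvPolynomial in
lemma coeff_two (x y A B : Fin 2 → ℕ) :
    MvPolynomial.coeff (Finsupp.equivFunOnFinite.symm (Sum.elim x y)) (swapSubPoly 2 A B) =
      ∑ p ∈ Finset.range (A 0 + 1), ∑ w ∈ Finset.range (B 1 + 1),
        if w = x 0 ∧ B 0 + (B 1 - w) = x 1 ∧ p + A 1 = y 0 ∧ A 0 - p = y 1 then
          (((A 0).choose p : ℚ) * ((B 1).choose w) * (-1) ^ (w + B 1) *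
            ((B 0).factorial : ℚ)⁻¹ * ((B 1).factorial : ℚ)⁻¹)
        else 0 := by
  have h : swapSubPoly 2 A B =
      ((MvPolynomial.X (Sum.inr 0) + MvPolynomial.X (Sum.inr 1) : MvPolynomial (Fin 2 ⊕ Fin 2) ℚ) ^ A 0 *
          (MvPolynomial.X (Sum.inl 1) - 0) ^ B 0 * MvPolynomial.C (((B 0).factorial : ℚ)⁻¹)) *
      ((MvPolynomial.X (Sum.inr 0) : MvPolynomial (Fin 2 ⊕ Fin 2) ℚ) ^ A 1 *
          (MvPolynomial.X (Sum.inl 0) - MvPolynomial.X (Sum.inl 1)) ^ B 1 *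
          MvPolynomial.C (((B 1).factorial : ℚ)⁻¹)) := by
    simp [swapSubPoly, Fin.prod_univ_two, Fin.sum_univ_two]
  rw [h, sub_zero, add_pow, sub_pow]
  simp only [Finset.sum_mul, Finset.mul_sum, MvPolynomial.coeff_sum]
  rw [Finset.sum_comm]
  refine Finset.sum_congr rfl (fun p hp => ?_)
  refine Finset.sum_congr rfl (fun w hw => ?_)
  have e : (MvPolynomial.X (Sum.inr 0) ^ p * MvPolynomial.X (Sum.inr 1) ^ (A 0 - p) *
        (((A 0).choose p : ℕ) : MvPolynomial (Fin 2 ⊕ Fin 2) ℚ) *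
        MvPolynomial.X (Sum.inl 1) ^ B 0 * MvPolynomial.C (((B 0).factorial : ℚ)⁻¹) *
        (MvPolynomial.X (Sum.inr 0) ^ A 1 *
          ((-1) ^ (w + B 1) * MvPolynomial.X (Sum.inl 0) ^ w *
            MvPolynomial.X (Sum.inl 1) ^ (B 1 - w) * (((B 1).choose w : ℕ) : MvPolynomial (Fin 2 ⊕ Fin 2) ℚ)) *
          MvPolynomial.C (((B 1).factorial : ℚ)⁻¹))) =
      MvPolynomial.C (((A 0).choose p : ℚ) * ((B 1).choose w) * (-1) ^ (w + B 1) *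
            ((B 0).factorial : ℚ)⁻¹ * ((B 1).factorial : ℚ)⁻¹) *
        MvPolynomial.X (Sum.inl 0) ^ w * MvPolynomial.X (Sum.inl 1) ^ (B 0 + (B 1 - w)) *
        MvPolynomial.X (Sum.inr 0) ^ (p + A 1) * MvPolynomial.X (Sum.inr 1) ^ (A 0 - p) := by
    simp only [map_mul, map_pow, map_neg, map_one, map_natCast]
    ring
  rw [e, coeff_canon]
  simp only [finsupp_eq_two]

lemma inner_collapse (k₁ k₂ m₁ m₂ a0 a1 b0 b1 : ℕ) :
    (∑ p ∈ Finset.range (a0+1), ∑ w ∈ Finset.range (b1+1),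
      if w = k₁-1 ∧ b0 + (b1 - w) = k₂-1 ∧ p + a1 = m₁ ∧ a0 - p = m₂ then
        ((a0.choose p : ℚ) * (b1.choose w) * (-1)^(w+b1) *
          ((b0.factorial : ℚ))⁻¹ * ((b1.factorial : ℚ))⁻¹) else 0)
    = if a1 ≤ m₁ ∧ b0 ≤ k₂-1 ∧ a0 = m₂ + (m₁ - a1) ∧ b1 = (k₁-1) + ((k₂-1) - b0) then
        ((a0.choose (m₁-a1) : ℚ) * (b1.choose (k₁-1)) * (-1)^((k₁-1)+b1) *
          ((b0.factorial : ℚ))⁻¹ * ((b1.factorial : ℚ))⁻¹) else 0 := by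
  have hterm : ∀ p ∈ Finset.range (a0+1), ∀ w ∈ Finset.range (b1+1),
      (if w = k₁-1 ∧ b0 + (b1 - w) = k₂-1 ∧ p + a1 = m₁ ∧ a0 - p = m₂ then
        ((a0.choose p : ℚ) * (b1.choose w) * (-1)^(w+b1) *
          ((b0.factorial : ℚ))⁻¹ * ((b1.factorial : ℚ))⁻¹) else 0)
      = if w = k₁-1 then (if p = m₁ - a1 then
          (if a1 ≤ m₁ ∧ b0 ≤ k₂-1 ∧ a0 = m₂ + (m₁ - a1) ∧ b1 = (k₁-1) + ((k₂-1) - b0) then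
            ((a0.choose (m₁-a1) : ℚ) * (b1.choose (k₁-1)) * (-1)^((k₁-1)+b1) *
              ((b0.factorial : ℚ))⁻¹ * ((b1.factorial : ℚ))⁻¹) else 0) else 0) else 0 := by
    intro p hp w hw
    rw [Finset.mem_range] at hp hw
    by_cases h1 : w = k₁-1 ∧ b0 + (b1 - w) = k₂-1 ∧ p + a1 = m₁ ∧ a0 - p = m₂
    · obtain ⟨e1, e2, e3, e4⟩ := h1
      have hpp : p = m₁ - a1 := by omega
      subst e1; subst hpp
      rw [if_pos ⟨rfl, e2, e3, e4⟩, if_pos rfl, if_pos rfl,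
        if_pos ⟨by omega, by omega, by omega, by omega⟩]
    · rw [if_neg h1]
      by_cases h2 : w = k₁ - 1
      · rw [if_pos h2]
        by_cases h3 : p = m₁ - a1
        · rw [if_pos h3, if_neg (by intro hc; exact h1 (by omega))]
        · rw [if_neg h3]
      · rw [if_neg h2]
  rw [Finset.sum_congr rfl (fun p hp => Finset.sum_congr rfl (fun w hw => hterm p hp w hw))]
  simp only [Finset.sum_ite_eq', Finset.mem_range]
  by_cases h4 : k₁ - 1 < b1 + 1
  · simp only [if_pos h4]
    simp only [Finset.sum_ite_eq', Finset.mem_range]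
    by_cases h5 : m₁ - a1 < a0 + 1
    · rw [if_pos h5]
    · rw [if_neg h5]
      rw [if_neg (by rintro ⟨-, -, h, -⟩; omega)]
  · simp only [if_neg h4, Finset.sum_const_zero]
    rw [if_neg (by rintro ⟨-, -, -, h⟩; omega)]

noncomputable def Vq (k₁ m₁ a0 a1 b0 b1 : ℕ) : ℚ :=
  (a0.choose (m₁-a1) : ℚ) * (b1.choose (k₁-1)) * (-1)^((k₁-1)+b1) *
    ((b0.factorial : ℚ))⁻¹ * ((b1.factorial : ℚ))⁻¹

lemma quad (k₁ k₂ m₁ m₂ n : ℕ) (hk₁ : 1 ≤ k₁) (hk₂ : 1 ≤ k₂)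
    (hn : n = k₁ - 1 + m₁ + (k₂ - 1 + m₂)) :
    ∑ a0 ∈ Finset.range (n+1), ∑ a1 ∈ Finset.range (n+1),
      ∑ b0 ∈ Finset.range (n+1), ∑ b1 ∈ Finset.range (n+1),
      (if a1 ≤ m₁ ∧ b0 ≤ k₂-1 ∧ a0 = m₂ + (m₁ - a1) ∧ b1 = (k₁-1) + ((k₂-1) - b0) then
        Vq k₁ m₁ a0 a1 b0 b1 else 0) • wY [(a0,b0),(a1,b1)]
    = ∑ u ∈ Finset.range (m₁+1), ∑ v ∈ Finset.range k₂,
        (((m₂+u).choose u : ℚ) * ((k₁-1+v).choose (k₁-1)) * (-1)^((k₁-1)+(k₁-1+v)) *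
          (((k₂-1-v).factorial : ℚ))⁻¹ * (((k₁-1+v).factorial : ℚ))⁻¹) •
          wY [(m₂+u, k₂-1-v), (m₁-u, k₁-1+v)] := by
  simp only [ite_smul, zero_smul]
  calc
    (∑ a0 ∈ Finset.range (n+1), ∑ a1 ∈ Finset.range (n+1),
      ∑ b0 ∈ Finset.range (n+1), ∑ b1 ∈ Finset.range (n+1),
      if a1 ≤ m₁ ∧ b0 ≤ k₂-1 ∧ a0 = m₂ + (m₁ - a1) ∧ b1 = (k₁-1) + ((k₂-1) - b0) then
        Vq k₁ m₁ a0 a1 b0 b1 • wY [(a0,b0),(a1,b1)] else 0)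
      = ∑ a1 ∈ Finset.range (n+1), ∑ b0 ∈ Finset.range (n+1),
          ∑ a0 ∈ Finset.range (n+1), ∑ b1 ∈ Finset.range (n+1),
          if a1 ≤ m₁ ∧ b0 ≤ k₂-1 ∧ a0 = m₂ + (m₁ - a1) ∧ b1 = (k₁-1) + ((k₂-1) - b0) then
            Vq k₁ m₁ a0 a1 b0 b1 • wY [(a0,b0),(a1,b1)] else 0 := by
        rw [Finset.sum_comm]
        exact Finset.sum_congr rfl (fun a1 _ => by rw [Finset.sum_comm])
    _ = ∑ a1 ∈ Finset.range (n+1), ∑ b0 ∈ Finset.range (n+1),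
          (if a1 ≤ m₁ ∧ b0 ≤ k₂-1 then
            Vq k₁ m₁ (m₂ + (m₁ - a1)) a1 b0 ((k₁-1) + ((k₂-1) - b0)) •
              wY [(m₂ + (m₁ - a1), b0), (a1, (k₁-1) + ((k₂-1) - b0))] else 0) := by
        refine Finset.sum_congr rfl (fun a1 _ => Finset.sum_congr rfl (fun b0 _ => ?_))
        have step1 : ∀ a0 ∈ Finset.range (n+1),
            (∑ b1 ∈ Finset.range (n+1),
              if a1 ≤ m₁ ∧ b0 ≤ k₂-1 ∧ a0 = m₂ + (m₁ - a1) ∧ b1 = (k₁-1) + ((k₂-1) - b0) then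
                Vq k₁ m₁ a0 a1 b0 b1 • wY [(a0,b0),(a1,b1)] else 0)
            = if a0 = m₂ + (m₁ - a1) then
                (if a1 ≤ m₁ ∧ b0 ≤ k₂-1 then
                  Vq k₁ m₁ a0 a1 b0 ((k₁-1) + ((k₂-1) - b0)) •
                    wY [(a0,b0),(a1,(k₁-1) + ((k₂-1) - b0))] else 0) else 0 := by
          intro a0 _
          have hterm : ∀ b1 ∈ Finset.range (n+1),
              (if a1 ≤ m₁ ∧ b0 ≤ k₂-1 ∧ a0 = m₂ + (m₁ - a1) ∧ b1 = (k₁-1) + ((k₂-1) - b0) then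
                Vq k₁ m₁ a0 a1 b0 b1 • wY [(a0,b0),(a1,b1)] else 0)
              = if b1 = (k₁-1) + ((k₂-1) - b0) then
                  (if a0 = m₂ + (m₁ - a1) then (if a1 ≤ m₁ ∧ b0 ≤ k₂-1 then
                    Vq k₁ m₁ a0 a1 b0 b1 • wY [(a0,b0),(a1,b1)] else 0) else 0) else 0 := by
            intro b1 _
            split_ifs <;> tauto
          rw [Finset.sum_congr rfl hterm, Finset.sum_ite_eq' (Finset.range (n+1)),
            if_pos (by rw [Finset.mem_range]; omega)]
        rw [Finset.sum_congr rfl step1, Finset.sum_ite_eq' (Finset.range (n+1)),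
          if_pos (by rw [Finset.mem_range]; omega)]
    _ = ∑ a1 ∈ Finset.range (m₁+1), ∑ b0 ∈ Finset.range k₂,
          Vq k₁ m₁ (m₂ + (m₁ - a1)) a1 b0 ((k₁-1) + ((k₂-1) - b0)) •
            wY [(m₂ + (m₁ - a1), b0), (a1, (k₁-1) + ((k₂-1) - b0))] := by
        rw [← Finset.sum_subset (Finset.range_subset_range.mpr (show m₁+1 ≤ n+1 by omega))
          (fun a1 _ h => Finset.sum_eq_zero (fun b0 _ => by
            rw [if_neg]; rw [Finset.mem_range] at h; push_neg at h ⊢; intro hc; omega))]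
        refine Finset.sum_congr rfl (fun a1 ha1 => ?_)
        rw [Finset.mem_range] at ha1
        rw [← Finset.sum_subset (Finset.range_subset_range.mpr (show k₂ ≤ n+1 by omega))
          (fun b0 _ h => by
            rw [if_neg]; rw [Finset.mem_range] at h; push_neg at h ⊢; intro hc; omega)]
        refine Finset.sum_congr rfl (fun b0 hb0 => ?_)
        rw [Finset.mem_range] at hb0
        rw [if_pos ⟨by omega, by omega⟩]
    _ = ∑ u ∈ Finset.range (m₁+1), ∑ v ∈ Finset.range k₂,
        (((m₂+u).choose u : ℚ) * ((k₁-1+v).choose (k₁-1)) * (-1)^((k₁-1)+(k₁-1+v)) *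
          (((k₂-1-v).factorial : ℚ))⁻¹ * (((k₁-1+v).factorial : ℚ))⁻¹) •
          wY [(m₂+u, k₂-1-v), (m₁-u, k₁-1+v)] := by
        refine Finset.sum_nbij' (fun a1 => m₁ - a1) (fun u => m₁ - u) ?_ ?_ ?_ ?_ ?_
        · intro a ha; rw [Finset.mem_range] at *; omega
        · intro a ha; rw [Finset.mem_range] at *; omega
        · intro a ha; rw [Finset.mem_range] at ha; omega
        · intro a ha; rw [Finset.mem_range] at ha; omega
        · intro a1 ha1
          rw [Finset.mem_range] at ha1
          refine Finset.sum_nbij' (fun b0 => k₂ - 1 - b0) (fun v => k₂ - 1 - v) ?_ ?_ ?_ ?_ ?_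
          · intro b hb; rw [Finset.mem_range] at *; omega
          · intro b hb; rw [Finset.mem_range] at *; omega
          · intro b hb; rw [Finset.mem_range] at hb; omega
          · intro b hb; rw [Finset.mem_range] at hb; omega
          · intro b0 hb0
            rw [Finset.mem_range] at hb0
            have h1 : m₁ - (m₁ - a1) = a1 := by omega
            have h2 : k₂ - 1 - (k₂ - 1 - b0) = b0 := by omega
            simp only [h1, h2]
            unfold Vq
            simp only [h1, h2]

lemma scalar_eq (k₁ k₂ m₁ m₂ u v : ℕ) (hk₁ : 1 ≤ k₁) :
    ((m₁.factorial : ℚ) * (m₂.factorial : ℚ)) *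
      (((m₂+u).choose u : ℚ) * ((k₁-1+v).choose (k₁-1)) * (-1)^((k₁-1)+(k₁-1+v)) *
        (((k₂-1-v).factorial : ℚ))⁻¹ * (((k₁-1+v).factorial : ℚ))⁻¹)
    = ((-1 : ℚ) ^ v / ((u.factorial : ℚ) * (v.factorial : ℚ))) *
        ((m₁.factorial : ℚ) / (((k₁ - 1).factorial : ℚ))) *
        (((m₂ + u).factorial : ℚ) / (((k₂ - 1 - v).factorial : ℚ))) := by
  have hs : ((-1 : ℚ))^((k₁-1)+(k₁-1+v)) = (-1)^v := by
    rw [show (k₁-1)+(k₁-1+v) = 2*(k₁-1)+v by ring, pow_add, pow_mul]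
    norm_num
  rw [hs, Nat.cast_choose ℚ (Nat.le_add_left u m₂), Nat.cast_choose ℚ (Nat.le_add_right (k₁-1) v)]
  rw [Nat.add_sub_cancel, Nat.add_sub_cancel_left]
  have h1 : ((u.factorial : ℚ)) ≠ 0 := Nat.cast_ne_zero.mpr u.factorial_ne_zero
  have h2 : ((v.factorial : ℚ)) ≠ 0 := Nat.cast_ne_zero.mpr v.factorial_ne_zero
  have h3 : ((m₂.factorial : ℚ)) ≠ 0 := Nat.cast_ne_zero.mpr m₂.factorial_ne_zero
  have h4 : (((k₁-1).factorial : ℚ)) ≠ 0 := Nat.cast_ne_zero.mpr (k₁-1).factorial_ne_zero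
  have h5 : (((k₂-1-v).factorial : ℚ)) ≠ 0 := Nat.cast_ne_zero.mpr (k₂-1-v).factorial_ne_zero
  have h6 : (((k₁-1+v).factorial : ℚ)) ≠ 0 := Nat.cast_ne_zero.mpr (k₁-1+v).factorial_ne_zero
  field_simp

end helpers

/-- If `swap : ℚ⟨Y^bi⟩ → ℚ⟨Y^bi⟩` is the `ℚ`-linear map determined
by the defining generating-series property, then for all `k₁, k₂ ≥ 1`, `m₁, m₂ ≥ 0`:
`swap(y_{k₁,m₁}) = (m₁!/(k₁-1)!) · y_{m₁+1,k₁-1}` and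
`swap(y_{k₁,m₁}y_{k₂,m₂}) = ∑_{u=0}^{m₁} ∑_{v=0}^{k₂-1} ((-1)^v/(u!·v!)) ·
  (m₁!/(k₁-1)!) · ((m₂+u)!/(k₂-1-v)!) · y_{m₂+1+u,k₂-1-v} y_{m₁+1-u,k₁-1+v}`. -/
theorem swap_depth_one_two (swapF : QY →ₗ[ℚ] QY)
    (hswap : ∀ (d : ℕ) (x y : Fin d → ℕ),
      swapF (wY (List.ofFn fun i => (x i, y i))) =
        (∏ i : Fin d, ((y i).factorial : ℚ)) •
          ∑ A ∈ Fintype.piFinset fun _ : Fin d =>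
              Finset.range ((∑ i : Fin d, (x i + y i)) + 1),
            ∑ B ∈ Fintype.piFinset fun _ : Fin d =>
                Finset.range ((∑ i : Fin d, (x i + y i)) + 1),
              MvPolynomial.coeff (Finsupp.equivFunOnFinite.symm (Sum.elim x y))
                  (swapSubPoly d A B) •
                wY (List.ofFn fun i => (A i, B i)))
    (k₁ k₂ m₁ m₂ : ℕ) (hk₁ : 1 ≤ k₁) (hk₂ : 1 ≤ k₂) :
    swapF (wY [(k₁ - 1, m₁)]) =
      ((m₁.factorial : ℚ) / ((k₁ - 1).factorial : ℚ)) • wY [(m₁, k₁ - 1)] ∧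
    swapF (wY [(k₁ - 1, m₁), (k₂ - 1, m₂)]) =
      ∑ u ∈ Finset.range (m₁ + 1), ∑ v ∈ Finset.range k₂,
        (((-1 : ℚ) ^ v / ((u.factorial : ℚ) * (v.factorial : ℚ))) *
            ((m₁.factorial : ℚ) / ((k₁ - 1).factorial : ℚ)) *
            (((m₂ + u).factorial : ℚ) / ((k₂ - 1 - v).factorial : ℚ))) •
          wY [(m₂ + u, k₂ - 1 - v), (m₁ - u, k₁ - 1 + v)] := by
  constructor
  · have h1 := hswap 1 (fun _ => k₁ - 1) (fun _ => m₁)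
    simp only [List.ofFn_succ, List.ofFn_zero, Fin.prod_univ_one, Fin.sum_univ_one] at h1
    have key : ∑ A ∈ Fintype.piFinset fun _ : Fin 1 => Finset.range (k₁ - 1 + m₁ + 1),
        ∑ B ∈ Fintype.piFinset fun _ : Fin 1 => Finset.range (k₁ - 1 + m₁ + 1),
          MvPolynomial.coeff (Finsupp.equivFunOnFinite.symm
              (Sum.elim (fun _ => k₁ - 1) (fun _ => m₁)))
            (swapSubPoly 1 A B) • wY [(A 0, B 0)]
        = (((k₁-1).factorial : ℚ))⁻¹ • wY [(m₁, k₁ - 1)] := by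
      rw [sum_piFinset_one]
      have step : ∀ a ∈ Finset.range (k₁ - 1 + m₁ + 1),
          (∑ B ∈ Fintype.piFinset fun _ : Fin 1 => Finset.range (k₁ - 1 + m₁ + 1),
            MvPolynomial.coeff (Finsupp.equivFunOnFinite.symm
                (Sum.elim (fun _ => k₁ - 1) (fun _ => m₁)))
              (swapSubPoly 1 (fun _ => a) B) • wY [((fun _ : Fin 1 => a) 0, B 0)])
          = ∑ b ∈ Finset.range (k₁ - 1 + m₁ + 1),
              (if b = k₁ - 1 then (if a = m₁ then (((k₁-1).factorial : ℚ))⁻¹ else 0) else 0) • wY [(a, b)] := by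
        intro a _
        rw [sum_piFinset_one]
        refine Finset.sum_congr rfl (fun b _ => ?_)
        rw [coeff_one]
        congr 1
        by_cases hb : b = k₁ - 1 <;> by_cases ha : a = m₁ <;> simp [ha, hb]
      rw [Finset.sum_congr rfl step]
      simp only [ite_smul, zero_smul, Finset.sum_ite_eq', Finset.mem_range,
        show (k₁ - 1 < k₁ - 1 + m₁ + 1) = True from eq_true (by omega),
        show (m₁ < k₁ - 1 + m₁ + 1) = True from eq_true (by omega), if_true]
    rw [h1, key, smul_smul, div_eq_mul_inv]
  · have h2 := hswap 2 ![k₁ - 1, k₂ - 1] ![m₁, m₂]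
    simp only [List.ofFn_succ, List.ofFn_zero, Fin.prod_univ_two, Fin.sum_univ_two,
      Fin.succ_zero_eq_one, Matrix.cons_val_zero, Matrix.cons_val_one, Matrix.head_cons] at h2
    have key : ∑ A ∈ Fintype.piFinset fun _ : Fin 2 =>
          Finset.range (k₁ - 1 + m₁ + (k₂ - 1 + m₂) + 1),
        ∑ B ∈ Fintype.piFinset fun _ : Fin 2 =>
            Finset.range (k₁ - 1 + m₁ + (k₂ - 1 + m₂) + 1),
          MvPolynomial.coeff (Finsupp.equivFunOnFinite.symm
              (Sum.elim ![k₁ - 1, k₂ - 1] ![m₁, m₂]))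
            (swapSubPoly 2 A B) • wY [(A 0, B 0), (A 1, B 1)]
        = ∑ u ∈ Finset.range (m₁+1), ∑ v ∈ Finset.range k₂,
            (((m₂+u).choose u : ℚ) * ((k₁-1+v).choose (k₁-1)) * (-1)^((k₁-1)+(k₁-1+v)) *
              (((k₂-1-v).factorial : ℚ))⁻¹ * (((k₁-1+v).factorial : ℚ))⁻¹) •
              wY [(m₂+u, k₂-1-v), (m₁-u, k₁-1+v)] := by
      rw [sum_piFinset_two]
      rw [← quad k₁ k₂ m₁ m₂ (k₁ - 1 + m₁ + (k₂ - 1 + m₂)) hk₁ hk₂ rfl]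
      refine Finset.sum_congr rfl (fun a0 _ => ?_)
      refine Finset.sum_congr rfl (fun a1 _ => ?_)
      rw [sum_piFinset_two]
      refine Finset.sum_congr rfl (fun b0 _ => ?_)
      refine Finset.sum_congr rfl (fun b1 _ => ?_)
      rw [coeff_two]
      simp only [Matrix.cons_val_zero, Matrix.cons_val_one, Matrix.head_cons]
      exact (congrArg (· • wY [(a0, b0), (a1, b1)]) (inner_collapse k₁ k₂ m₁ m₂ a0 a1 b0 b1) :)
    rw [h2, key, Finset.smul_sum]
    refine Finset.sum_congr rfl (fun u _ => ?_)
    rw [Finset.smul_sum]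
    refine Finset.sum_congr rfl (fun v _ => ?_)
    rw [smul_smul, scalar_eq k₁ k₂ m₁ m₂ u v hk₁]
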